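/- Let R be a principal ideal domain, c,d ∈ ℤ, and let A be a nonzero ℤ-graded R-module with (c,d)-graded Frobenius data (μ,η,ν,ε) satisfying the signed relations (i)–(v). Then the unit is injective and the counit is surjective: the R-linear map R → A_{−c}, r ↦ r·η(1), is injective, and the R-linear map ε : A_d → R is surjective; in particular A_{−c} ≠ 0 and A_d ≠ 0, so A contains a free summand of rank one in degree −c and a free summand of rank one in degree d. -/

import Mathlib

/-! # A framework for ℤ-graded modules with Koszul sign conventions -/

noncomputable section
open scoped TensorProduct DirectSum

/-- The sign `(−1)^z` for an integer `z` (depends only on the parity of `z`),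
as an element of the ring `R`. -/
def gsign (R : Type) [CommRing R] (z : ℤ) : R := (-1 : R) ^ z.natAbs

/-- A ℤ-graded `R`-module: a family of `R`-modules indexed by `ℤ`. -/
structure GradedModule (R : Type) [CommRing R] where
  piece : ℤ → Type
  [acg : ∀ i, AddCommGroup (piece i)]
  [mod : ∀ i, Module R (piece i)]

attribute [instance 2000] GradedModule.acg GradedModule.mod

variable {R : Type} [CommRing R]

/-- Transport along an equality of degrees. -/
def GradedModule.pcast (A : GradedModule R) {i j : ℤ} (h : i = j) :
    A.piece i →ₗ[R] A.piece j where
  toFun a := h ▸ a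
  map_add' a b := by subst h; rfl
  map_smul' r a := by subst h; rfl

/-- The tensor product of graded modules: `(A ⊗ B)_k = ⊕_{p+q=k} A_p ⊗ B_q`. -/
def GradedModule.tensor (A B : GradedModule R) : GradedModule R where
  piece k := ⨁ p : ℤ, (A.piece p ⊗[R] B.piece (k - p))

/-- The unit object: `R` concentrated in degree `0`. -/
def gUnit (R : Type) [CommRing R] : GradedModule R where
  piece k := ↥(if k = 0 then (⊤ : Submodule R R) else ⊥)

/-- A graded map of degree `deg`: a family of `R`-linear maps `A_i → B_{i+deg}`. -/
structure GMap (A B : GradedModule R) where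
  deg : ℤ
  app : ∀ i, A.piece i →ₗ[R] B.piece (i + deg)

namespace GMap

/-- The identity graded map (degree `0`). -/
protected def id (A : GradedModule R) : GMap A A :=
  ⟨0, fun i => A.pcast (by ring)⟩

/-- Composition of graded maps (maps act from the left; `g.comp f = g ∘ f`). -/
def comp {A B C : GradedModule R} (g : GMap B C) (f : GMap A B) : GMap A C :=
  ⟨f.deg + g.deg, fun i =>
    (C.pcast (by ring)).comp ((g.app (i + f.deg)).comp (f.app i))⟩

/-- Scalar multiplication of a graded map. -/
instance {A B : GradedModule R} : SMul R (GMap A B) :=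
  ⟨fun r f => ⟨f.deg, fun i => r • f.app i⟩⟩

/-- Re-present a graded map with an equal degree expression. -/
def reindex {A B : GradedModule R} (f : GMap A B) (n : ℤ) (h : f.deg = n) : GMap A B :=
  ⟨n, fun i => (B.pcast (by rw [h])).comp (f.app i)⟩

/-- The Koszul-signed tensor product of graded maps:
`(f ⊗ g)(a ⊗ b) = (−1)^{|g|·|a|} f(a) ⊗ g(b)`. -/
def tmul {A A' B B' : GradedModule R} (f : GMap A A') (g : GMap B B') :
    GMap (A.tensor B) (A'.tensor B') :=
  ⟨f.deg + g.deg, fun k =>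
    DirectSum.toModule R ℤ _ fun p =>
      (DirectSum.lof R ℤ
          (fun q => A'.piece q ⊗[R] B'.piece (k + (f.deg + g.deg) - q)) (p + f.deg)).comp
        (gsign R (g.deg * p) •
          (TensorProduct.map (f.app p)
            ((B'.pcast (show (k - p) + g.deg = k + (f.deg + g.deg) - (p + f.deg) by ring)).comp
              (g.app (k - p)))))⟩

end GMap

/-- The Koszul twist `τ : A ⊗ B → B ⊗ A`, `τ(a ⊗ b) = (−1)^{|a||b|} b ⊗ a`. -/
def twistG (A B : GradedModule R) : GMap (A.tensor B) (B.tensor A) :=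
  ⟨0, fun k =>
    DirectSum.toModule R ℤ _ fun p =>
      (DirectSum.lof R ℤ (fun q => B.piece q ⊗[R] A.piece (k + 0 - q)) (k - p)).comp
        (gsign R (p * (k - p)) •
          ((LinearMap.lTensor (B.piece (k - p)) (A.pcast (show p = k + 0 - (k - p) by ring))).comp
            (TensorProduct.comm R (A.piece p) (B.piece (k - p))).toLinearMap))⟩

/-- The associator `(A ⊗ B) ⊗ C → A ⊗ (B ⊗ C)` (no signs). -/
def assocG (A B C : GradedModule R) :
    GMap ((A.tensor B).tensor C) (A.tensor (B.tensor C)) :=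
  ⟨0, fun k =>
    DirectSum.toModule R ℤ _ fun p =>
      (DirectSum.toModule R ℤ _ fun q =>
        (DirectSum.lof R ℤ (fun q' => A.piece q' ⊗[R] (B.tensor C).piece (k + 0 - q')) q).comp
          ((LinearMap.lTensor (A.piece q)
            ((DirectSum.lof R ℤ (fun s => B.piece s ⊗[R] C.piece ((k + 0 - q) - s)) (p - q)).comp
              (LinearMap.lTensor (B.piece (p - q))
                (C.pcast (show k - p = (k + 0 - q) - (p - q) by ring))))).comp
            (TensorProduct.assoc R (A.piece q) (B.piece (p - q)) (C.piece (k - p))).toLinearMap)).comp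
        (TensorProduct.directSumLeft R R (fun q => A.piece q ⊗[R] B.piece (p - q))
          (C.piece (k - p))).toLinearMap⟩

/-- The inverse associator `A ⊗ (B ⊗ C) → (A ⊗ B) ⊗ C` (no signs). -/
def assocInvG (A B C : GradedModule R) :
    GMap (A.tensor (B.tensor C)) ((A.tensor B).tensor C) :=
  ⟨0, fun k =>
    DirectSum.toModule R ℤ _ fun p =>
      (DirectSum.toModule R ℤ _ fun s =>
        (DirectSum.lof R ℤ
            (fun q' => (A.tensor B).piece q' ⊗[R] C.piece (k + 0 - q')) (p + s)).comp
          ((TensorProduct.map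
              ((DirectSum.lof R ℤ (fun q => A.piece q ⊗[R] B.piece ((p + s) - q)) p).comp
                (LinearMap.lTensor (A.piece p) (B.pcast (show s = (p + s) - p by ring))))
              (C.pcast (show (k - p) - s = k + 0 - (p + s) by ring))).comp
            (TensorProduct.assoc R (A.piece p) (B.piece s)
              (C.piece ((k - p) - s))).symm.toLinearMap)).comp
        (TensorProduct.directSumRight R R (A.piece p)
          (fun s => B.piece s ⊗[R] C.piece ((k - p) - s))).toLinearMap⟩

/-- The left unitor `𝟙 ⊗ A → A`. -/
def lunitor (A : GradedModule R) : GMap ((gUnit R).tensor A) A :=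
  ⟨0, fun k =>
    DirectSum.toModule R ℤ _ fun p =>
      if h : p = 0 then
        TensorProduct.lift
          ((LinearMap.toSpanSingleton R (A.piece (k - p) →ₗ[R] A.piece (k + 0))
              (A.pcast (by omega))).comp
            (Submodule.subtype (if p = 0 then (⊤ : Submodule R R) else ⊥)))
      else 0⟩

/-- The right unitor `A ⊗ 𝟙 → A`. -/
def runitor (A : GradedModule R) : GMap (A.tensor (gUnit R)) A :=
  ⟨0, fun k =>
    DirectSum.toModule R ℤ _ fun p =>
      if h : k - p = 0 then
        TensorProduct.lift
          (((LinearMap.toSpanSingleton R (A.piece p →ₗ[R] A.piece (k + 0))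
              (A.pcast (by omega))).comp
            (Submodule.subtype (if k - p = 0 then (⊤ : Submodule R R) else ⊥))).flip)
      else 0⟩

/-- The inverse left unitor `A → 𝟙 ⊗ A`. -/
def lunitorInv (A : GradedModule R) : GMap A ((gUnit R).tensor A) :=
  ⟨0, fun k =>
    (DirectSum.lof R ℤ (fun p => (gUnit R).piece p ⊗[R] A.piece (k + 0 - p)) 0).comp
      (((TensorProduct.mk R ((gUnit R).piece 0) (A.piece (k + 0 - 0))) ⟨1, by simp⟩).comp
        (A.pcast (by ring)))⟩

/-- The inverse right unitor `A → A ⊗ 𝟙`. -/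
def runitorInv (A : GradedModule R) : GMap A (A.tensor (gUnit R)) :=
  ⟨0, fun k =>
    (DirectSum.lof R ℤ (fun p => A.piece p ⊗[R] (gUnit R).piece (k + 0 - p)) k).comp
      ((TensorProduct.mk R (A.piece k) ((gUnit R).piece (k + 0 - k))).flip
        ⟨1, by simp⟩)⟩


/-- The underlying element of `R` of an element of a piece of the unit object. -/
def unitVal {R : Type} [CommRing R] (k : ℤ) : (gUnit R).piece k →ₗ[R] R :=
  Submodule.subtype _
section FrobeniusRelations

variable {R : Type} [CommRing R]

/-- (i) graded associativity: `μ∘(μ⊗id) = (−1)^c μ∘(id⊗μ)` (under the associator). -/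
def relAssoc (c : ℤ) {A : GradedModule R} (μ : GMap (A.tensor A) A) : Prop :=
  μ.comp (μ.tmul (GMap.id A)) =
    gsign R c • ((μ.comp ((GMap.id A).tmul μ)).comp (assocG A A A))

/-- (ii) graded unitality: `(−1)^c μ∘(η⊗id) = (−1)^{c(c−1)/2} id = μ∘(id⊗η)`
(under the unitors). -/
def relUnit (c : ℤ) {A : GradedModule R} (μ : GMap (A.tensor A) A)
    (η : GMap (gUnit R) A) : Prop :=
  gsign R c • ((μ.comp (η.tmul (GMap.id A))).comp (lunitorInv A)) =
      gsign R (c * (c - 1) / 2) • GMap.id A ∧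
  (μ.comp ((GMap.id A).tmul η)).comp (runitorInv A) =
      gsign R (c * (c - 1) / 2) • GMap.id A

/-- (iii) graded coassociativity: `(id⊗ν)∘ν = (−1)^d (ν⊗id)∘ν` (under the associator). -/
def relCoassoc (d : ℤ) {A : GradedModule R} (ν : GMap A (A.tensor A)) : Prop :=
  ((GMap.id A).tmul ν).comp ν =
    gsign R d • ((assocG A A A).comp ((ν.tmul (GMap.id A)).comp ν))

/-- (iv) graded counitality: `(−1)^d (id⊗ε)∘ν = (−1)^{d(d−1)/2} id = (ε⊗id)∘ν`
(under the unitors). -/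
def relCounit (d : ℤ) {A : GradedModule R} (ν : GMap A (A.tensor A))
    (ε : GMap A (gUnit R)) : Prop :=
  gsign R d • ((runitor A).comp (((GMap.id A).tmul ε).comp ν)) =
      gsign R (d * (d - 1) / 2) • GMap.id A ∧
  (lunitor A).comp ((ε.tmul (GMap.id A)).comp ν) =
      gsign R (d * (d - 1) / 2) • GMap.id A

/-- (v) graded Frobenius relation:
`(μ⊗id)∘(id⊗ν) = (−1)^{cd} ν∘μ = (id⊗μ)∘(ν⊗id)` (under the associators). -/
def relFrob (c d : ℤ) {A : GradedModule R} (μ : GMap (A.tensor A) A)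
    (ν : GMap A (A.tensor A)) : Prop :=
  (μ.tmul (GMap.id A)).comp ((assocInvG A A A).comp ((GMap.id A).tmul ν)) =
      gsign R (c * d) • (ν.comp μ) ∧
  ((GMap.id A).tmul μ).comp ((assocG A A A).comp (ν.tmul (GMap.id A))) =
      gsign R (c * d) • (ν.comp μ)

/-- (vi) graded commutativity: `μ∘τ = (−1)^c μ`. -/
def relComm (c : ℤ) {A : GradedModule R} (μ : GMap (A.tensor A) A) : Prop :=
  μ.comp (twistG A A) = gsign R c • μ

/-- (vi') graded symmetry: `ε∘μ∘τ = (−1)^c ε∘μ`. -/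
def relSymm (c : ℤ) {A : GradedModule R} (μ : GMap (A.tensor A) A)
    (ε : GMap A (gUnit R)) : Prop :=
  (ε.comp μ).comp (twistG A A) = gsign R c • (ε.comp μ)

/-- Unsigned unitality `μ∘(η⊗id) = id = μ∘(id⊗η)` (under the unitors). -/
def relUnit₀ {A : GradedModule R} (μ : GMap (A.tensor A) A)
    (η : GMap (gUnit R) A) : Prop :=
  (μ.comp (η.tmul (GMap.id A))).comp (lunitorInv A) = GMap.id A ∧
  (μ.comp ((GMap.id A).tmul η)).comp (runitorInv A) = GMap.id A

/-- Unsigned counitality `(id⊗ε)∘ν = id = (ε⊗id)∘ν` (under the unitors). -/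
def relCounit₀ {A : GradedModule R} (ν : GMap A (A.tensor A))
    (ε : GMap A (gUnit R)) : Prop :=
  (runitor A).comp (((GMap.id A).tmul ε).comp ν) = GMap.id A ∧
  (lunitor A).comp ((ε.tmul (GMap.id A)).comp ν) = GMap.id A

/-- Unsigned Frobenius relation `(μ⊗id)∘(id⊗ν) = ν∘μ = (id⊗μ)∘(ν⊗id)`
(under the associators). -/
def relFrob₀ {A : GradedModule R} (μ : GMap (A.tensor A) A)
    (ν : GMap A (A.tensor A)) : Prop :=
  (μ.tmul (GMap.id A)).comp ((assocInvG A A A).comp ((GMap.id A).tmul ν)) = ν.comp μ ∧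
  ((GMap.id A).tmul μ).comp ((assocG A A A).comp (ν.tmul (GMap.id A))) = ν.comp μ

/-- The zig-zag (duality) identities for a pairing `p : A⊗A → 𝟙` and a
copairing `q : 𝟙 → A⊗A`:
`(p⊗id)∘(id⊗q) = id = (id⊗p)∘(q⊗id)` (under the associators and unitors). -/
def relZigZag {A : GradedModule R} (p : GMap (A.tensor A) (gUnit R))
    (q : GMap (gUnit R) (A.tensor A)) : Prop :=
  (lunitor A).comp ((p.tmul (GMap.id A)).comp ((assocInvG A A A).comp
      (((GMap.id A).tmul q).comp (runitorInv A)))) = GMap.id A ∧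
  (runitor A).comp (((GMap.id A).tmul p).comp ((assocG A A A).comp
      ((q.tmul (GMap.id A)).comp (lunitorInv A)))) = GMap.id A

end FrobeniusRelations

/-! Left counitality writes every homogeneous `a` as `± Σ ε(xᵢ) • yᵢ` (only the degree-`d` part of
`ν a` survives `ε ⊗ id`), so `A = I • A` for the ideal `I = ε(A_d)` of `R`. Over a principal ideal
domain `I = (t)`, and `t ≠ 0` because `A ≠ 0`; writing `t = ε(x)` and `x = t • y` gives `ε(y) = 1`,
so the counit splits. Right unitality `μ(y ⊗ η(1)) = ± y` then shows that `a ↦ ± ε(μ(y ⊗ a))`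
is a retraction of `r ↦ r • η(1)`. -/

section Transport

variable {A B C : GradedModule R}

lemma GradedModule.pcast_pcast (A : GradedModule R) {i j k : ℤ} (h : i = j) (h' : j = k)
    (a : A.piece i) : A.pcast h' (A.pcast h a) = A.pcast (h.trans h') a := by
  subst h h'; rfl

lemma GradedModule.pcast_mem_smul_top (A : GradedModule R) {I : Ideal R} {i j : ℤ} (h : i = j)
    {a : A.piece i} (ha : a ∈ I • (⊤ : Submodule R (A.piece i))) :
    A.pcast h a ∈ I • (⊤ : Submodule R (A.piece j)) := by
  subst h; exact ha

namespace GMap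

lemma app_pcast (f : GMap A B) {i j : ℤ} (h : i = j) (a : A.piece i) :
    f.app j (A.pcast h a) = B.pcast (by rw [h]) (f.app i a) := by
  subst h; rfl

lemma congr_app {f g : GMap A B} (h : f = g) (i : ℤ) (a : A.piece i) :
    B.pcast (by rw [h]) (f.app i a) = g.app i a := by
  subst h; rfl

lemma comp_app (g : GMap B C) (f : GMap A B) (i : ℤ) (a : A.piece i) :
    (g.comp f).app i a =
      C.pcast (by simp only [GMap.comp]; ring) (g.app (i + f.deg) (f.app i a)) := rfl

lemma smul_app (r : R) (f : GMap A B) (i : ℤ) (a : A.piece i) :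
    (r • f).app i a = r • f.app i a := rfl

lemma id_app (i : ℤ) (a : A.piece i) :
    (GMap.id A).app i a = A.pcast (by simp only [GMap.id]; ring) a := rfl

lemma tmul_app_lof_tmul {A' B' : GradedModule R} (f : GMap A A') (g : GMap B B')
    (k p : ℤ) (a : A.piece p) (b : B.piece (k - p)) :
    (f.tmul g).app k (DirectSum.lof R ℤ (fun q => A.piece q ⊗[R] B.piece (k - q)) p (a ⊗ₜ b)) =
      gsign R (g.deg * p) • DirectSum.lof R ℤ
        (fun q => A'.piece q ⊗[R] B'.piece (k + (f.deg + g.deg) - q)) (p + f.deg)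
        (f.app p a ⊗ₜ B'.pcast (by ring) (g.app (k - p) b)) := by
  simp only [GMap.tmul]
  erw [DirectSum.toModule_lof, LinearMap.comp_apply, LinearMap.smul_apply, map_smul,
    TensorProduct.map_tmul]
  rfl

lemma unitVal_app_pcast (ε : GMap A (gUnit R)) {i j : ℤ} (h : i = j) (a : A.piece i) :
    unitVal (j + ε.deg) (ε.app j (A.pcast h a)) = unitVal (i + ε.deg) (ε.app i a) := by
  subst h; rfl

lemma app_gUnit_mk (η : GMap (gUnit R) A) {i j : ℤ} (h : i = j) (r : R)
    (hi : r ∈ (if i = 0 then (⊤ : Submodule R R) else ⊥))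
    (hj : r ∈ (if j = 0 then (⊤ : Submodule R R) else ⊥)) :
    η.app j ⟨r, hj⟩ = A.pcast (by rw [h]) (η.app i ⟨r, hi⟩) := by
  subst h; rfl

lemma app_zero_mk (η : GMap (gUnit R) A) (r : R) :
    η.app 0 ⟨r, by simp⟩ = r • η.app 0 ⟨1, by simp⟩ := by
  have hr : (⟨r, by simp⟩ : (gUnit R).piece 0) = r • ⟨1, by simp⟩ := Subtype.ext (mul_one r).symm
  erw [hr, map_smul]

end GMap

lemma lunitor_app_lof_tmul (A : GradedModule R) (k p : ℤ) (u : (gUnit R).piece p)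
    (a : A.piece (k - p)) :
    (lunitor A).app k (DirectSum.lof R ℤ _ p (u ⊗ₜ a)) =
      if h : p = 0 then unitVal p u • A.pcast (show k - p = k + 0 by omega) a else 0 := by
  simp only [lunitor]
  erw [DirectSum.toModule_lof]
  split_ifs <;> rfl

lemma runitorInv_app (A : GradedModule R) (k : ℤ) (a : A.piece k) :
    (runitorInv A).app k a = DirectSum.lof R ℤ (fun p => A.piece p ⊗[R] (gUnit R).piece (k + 0 - p))
      k (a ⊗ₜ[R] (⟨1, by simp⟩ : (gUnit R).piece (k + 0 - k))) := rfl

end Transport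

lemma gsign_mul_self (z : ℤ) : gsign R z * gsign R z = 1 := by
  rw [gsign, ← pow_add]
  exact Even.neg_one_pow ⟨_, rfl⟩

section Counit

variable {A : GradedModule R}

def counitIdeal (ε : GMap A (gUnit R)) (d : ℤ) : Ideal R :=
  LinearMap.range ((unitVal (d + ε.deg)).comp (ε.app d))

lemma range_lunitor_comp_counit_tmul_id_le (ε : GMap A (gUnit R)) {d : ℤ}
    (hε : ε.deg = -d) (k : ℤ) :
    LinearMap.range ((lunitor A).app _ ∘ₗ (ε.tmul (GMap.id A)).app k) ≤
      counitIdeal ε d • ⊤ := by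
  rw [← Submodule.ker_mkQ (counitIdeal ε d • ⊤), LinearMap.range_le_ker_iff]
  refine DirectSum.linearMap_ext R fun p => TensorProduct.ext' fun a b => ?_
  change Submodule.mkQ _ ((lunitor A).app _ ((ε.tmul (GMap.id A)).app k
    (DirectSum.lof R ℤ (fun i => A.piece i ⊗[R] A.piece (k - i)) p (a ⊗ₜ b)))) = 0
  rw [GMap.tmul_app_lof_tmul]
  erw [map_smul, lunitor_app_lof_tmul]
  rw [Submodule.mkQ_apply, Submodule.Quotient.mk_eq_zero]
  split_ifs with hp
  · obtain rfl : p = d := by omega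
    exact Submodule.smul_mem _ _ (Submodule.smul_mem_smul ⟨a, rfl⟩ Submodule.mem_top)
  · exact Submodule.smul_mem _ _ (Submodule.zero_mem _)

lemma mem_counitIdeal_smul_top (ν : GMap A (A.tensor A)) (ε : GMap A (gUnit R)) {d z : ℤ}
    (hε : ε.deg = -d)
    (hcounit : (lunitor A).comp ((ε.tmul (GMap.id A)).comp ν) = gsign R z • GMap.id A)
    (i : ℤ) (a : A.piece i) : a ∈ counitIdeal ε d • (⊤ : Submodule R (A.piece i)) := by
  have h := GMap.congr_app hcounit i a
  rw [GMap.comp_app, GMap.comp_app, GMap.app_pcast, GMap.smul_app, GMap.id_app] at h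
  simp only [GradedModule.pcast_pcast] at h
  have hmem := A.pcast_mem_smul_top (j := i + (gsign R z • GMap.id A).deg)
    (by have := congrArg GMap.deg hcounit; simp only [GMap.comp] at this; omega)
    (range_lunitor_comp_counit_tmul_id_le ε hε (i + ν.deg) ⟨ν.app i a, rfl⟩)
  erw [h] at hmem
  have := A.pcast_mem_smul_top (add_zero i) (Submodule.smul_mem _ (gsign R z) hmem)
  erw [smul_smul, gsign_mul_self, one_smul, GradedModule.pcast_pcast] at this
  exact this

lemma exists_counit_eq_one [IsDomain R] [IsPrincipalIdealRing R]
    (ν : GMap A (A.tensor A)) (ε : GMap A (gUnit R)) {d z : ℤ}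
    (hA : ∃ i, Nontrivial (A.piece i)) (hε : ε.deg = -d)
    (hcounit : (lunitor A).comp ((ε.tmul (GMap.id A)).comp ν) = gsign R z • GMap.id A) :
    ∃ y : A.piece d, unitVal (d + ε.deg) (ε.app d y) = 1 := by
  obtain ⟨t, ht⟩ := (IsPrincipalIdealRing.principal (counitIdeal ε d)).principal
  have hdvd : ∀ i (a : A.piece i), ∃ b, t • b = a := fun i a => by
    have ha := mem_counitIdeal_smul_top ν ε hε hcounit i a
    rw [ht, Submodule.ideal_span_singleton_smul, Submodule.mem_smul_pointwise_iff_exists] at ha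
    obtain ⟨b, -, hb⟩ := ha
    exact ⟨b, hb⟩
  have ht0 : t ≠ 0 := by
    rintro rfl
    obtain ⟨i, _⟩ := hA
    obtain ⟨a, ha⟩ := exists_ne (0 : A.piece i)
    obtain ⟨b, rfl⟩ := hdvd i a
    exact ha (zero_smul R b)
  obtain ⟨x, hx⟩ : t ∈ counitIdeal ε d := ht ▸ Ideal.mem_span_singleton_self t
  obtain ⟨y, rfl⟩ := hdvd d x
  refine ⟨y, mul_left_cancel₀ ht0 ?_⟩
  simpa using hx

end Counit

section Unit

variable {A : GradedModule R}

/-- The Frobenius form `a ↦ ε(μ(y ⊗ a))`. -/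
def frobeniusForm (μ : GMap (A.tensor A) A) (ε : GMap A (gUnit R)) {p q : ℤ} (y : A.piece p) :
    A.piece q →ₗ[R] R :=
  unitVal _ ∘ₗ ε.app _ ∘ₗ μ.app (p + q) ∘ₗ
    DirectSum.lof R ℤ (fun i => A.piece i ⊗[R] A.piece (p + q - i)) p ∘ₗ
    TensorProduct.mk R _ _ y ∘ₗ A.pcast (by ring)

lemma exists_unit_retraction (μ : GMap (A.tensor A) A) (η : GMap (gUnit R) A)
    (ε : GMap A (gUnit R)) {e z : ℤ}
    (hunit : (μ.comp ((GMap.id A).tmul η)).comp (runitorInv A) = gsign R z • GMap.id A)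
    (y : A.piece e) (hy : unitVal (e + ε.deg) (ε.app e y) = 1) :
    ∃ g : A.piece (0 + η.deg) →ₗ[R] R, ∀ r : R, g (η.app 0 ⟨r, by simp⟩) = r := by
  have h := congrArg (fun a => unitVal _ (ε.app _ a)) (GMap.congr_app hunit e y)
  simp only [GMap.smul_app, GMap.id_app, map_smul, smul_eq_mul, GMap.unitVal_app_pcast, hy] at h
  rw [GMap.comp_app, GMap.unitVal_app_pcast, GMap.comp_app, GMap.unitVal_app_pcast,
    runitorInv_app] at h
  erw [GMap.tmul_app_lof_tmul, GMap.app_gUnit_mk η (show (0 : ℤ) = e + (runitorInv A).deg - e by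
    simp only [runitorInv]; ring) 1 (by simp)] at h
  erw [map_smul (μ.app _), map_smul (ε.app _), map_smul (unitVal _), GradedModule.pcast_pcast] at h
  change gsign R (η.deg * e) * frobeniusForm (q := 0 + η.deg) μ ε
    (A.pcast (add_zero e).symm y) (η.app 0 ⟨1, by simp⟩) = gsign R z * 1 at h
  refine ⟨(gsign R (η.deg * e) * gsign R z) • frobeniusForm μ ε (A.pcast (add_zero e).symm y),
    fun r => ?_⟩
  rw [GMap.app_zero_mk, LinearMap.smul_apply, map_smul, smul_eq_mul, smul_eq_mul]
  linear_combination (gsign R z * r) * h + r * gsign_mul_self (R := R) z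

end Unit

/-- Over a principal ideal domain, for a nonzero graded module with
`(c,d)`-graded Frobenius data satisfying the signed relations (i)–(v), the unit map
`R → A_{−c}`, `r ↦ r·η(1)`, is injective, and the counit `ε : A_d → R` is surjective;
in particular `A_{−c} ≠ 0` and `A_d ≠ 0`, and `A` contains a free summand of rank one
in degree `−c` (the unit map splits) and in degree `d` (the counit splits). -/
theorem graded_frobenius_unit_counit
    (R : Type) [CommRing R] [IsDomain R] [IsPrincipalIdealRing R]
    (c d : ℤ) (A : GradedModule R) (hA : ∃ i, Nontrivial (A.piece i))
    (μ : GMap (A.tensor A) A) (η : GMap (gUnit R) A)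
    (ν : GMap A (A.tensor A)) (ε : GMap A (gUnit R))
    (hε : ε.deg = -d) (h₂ : relUnit c μ η) (h₄ : relCounit d ν ε) :
    Function.Injective (fun r : R => η.app 0 ⟨r, by simp⟩) ∧
    (∀ r : R, ∃ a : A.piece d, unitVal (d + ε.deg) (ε.app d a) = r) ∧
    Nontrivial (A.piece (0 + η.deg)) ∧ Nontrivial (A.piece d) ∧
    (∃ g : A.piece (0 + η.deg) →ₗ[R] R, ∀ r : R, g (η.app 0 ⟨r, by simp⟩) = r) ∧
    (∃ s : R →ₗ[R] A.piece d, ∀ r : R,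
        unitVal (d + ε.deg) (ε.app d (s r)) = r) := by
  obtain ⟨y, hy⟩ := exists_counit_eq_one ν ε hA hε h₄.2
  obtain ⟨g, hg⟩ := exists_unit_retraction μ η ε h₂.2 y hy
  set s := LinearMap.toSpanSingleton R _ y
  have hs : ∀ r, unitVal (d + ε.deg) (ε.app d (s r)) = r := fun r => by
    simp [s, hy]
  have hη_inj : Function.Injective (fun r : R => η.app 0 ⟨r, by simp⟩) :=
    Function.LeftInverse.injective hg
  have hs_inj : Function.Injective s :=
    Function.LeftInverse.injective (g := fun a => unitVal (d + ε.deg) (ε.app d a)) hs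
  exact ⟨hη_inj, fun r => ⟨s r, hs r⟩, hη_inj.nontrivial, hs_inj.nontrivial, ⟨g, hg⟩, ⟨s, hs⟩⟩
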